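/- The parametrization of the class G³ is bijective modulo the stated transformations: for x₁,y₁,x₂,y₂ ∈ ℝ³ with x₁×y₁ ≠ 0 and x₂×y₂ ≠ 0, one has G³(x₁,y₁) = G³(x₂,y₂) (as subgroups of SE(3)) if and only if there exist μ ∈ ℝ and ν ∈ ℝ, ν ≠ 0, such that x₂ = x₁ + μ y₁ and y₂ = ν y₁. -/

import Mathlib

open Matrix

/-- Vectors in ℝ³. -/
abbrev V3 : Type := Fin 3 → ℝ

/-- The two-body phase space M = ℝ³ × ℝ³ × ℝ³ × ℝ³, points (q¹, q², p¹, p²). -/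
abbrev M2B : Type := V3 × V3 × V3 × V3

/-- A 3×3 real matrix is special orthogonal. -/
def SO3 (A : Matrix (Fin 3) (Fin 3) ℝ) : Prop := Aᵀ * A = 1 ∧ A.det = 1

/-- The action of (A, a) ∈ SE(3) on the phase space:
(A,a)·(q¹,q²,p¹,p²) = (Aq¹+a, Aq²+a, Ap¹, Ap²). -/
def act (A : Matrix (Fin 3) (Fin 3) ℝ) (a : V3) (m : M2B) : M2B :=
  (A *ᵥ m.1 + a, A *ᵥ m.2.1 + a, A *ᵥ m.2.2.1, A *ᵥ m.2.2.2)

/-- The isotropy subgroup SE(3)_{(q,p)} of a point of M, as a set of pairs (A,a)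
with A special orthogonal. -/
def isotropy (m : M2B) : Set (Matrix (Fin 3) (Fin 3) ℝ × V3) :=
  {g | SO3 g.1 ∧ act g.1 g.2 m = m}

/-- The momentum map J(q¹,q²,p¹,p²) = (q¹×p¹ + q²×p², p¹+p²). -/
def Jmom (m : M2B) : V3 × V3 :=
  (m.1 ⨯₃ m.2.2.1 + m.2.1 ⨯₃ m.2.2.2, m.2.2.1 + m.2.2.2)

/-- G¹(x) = {(A,a) ∈ SE(3) : a = x − Ax}. -/
def G1 (x : V3) : Set (Matrix (Fin 3) (Fin 3) ℝ × V3) :=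
  {g | SO3 g.1 ∧ g.2 = x - g.1 *ᵥ x}

/-- G²(y) = {(A,0) ∈ SE(3) : Ay = y}. -/
def G2 (y : V3) : Set (Matrix (Fin 3) (Fin 3) ℝ × V3) :=
  {g | SO3 g.1 ∧ g.1 *ᵥ y = y ∧ g.2 = 0}

/-- G³(x,y) = {(A,a) ∈ SE(3) : Ay = y and a = x − Ax}. -/
def G3 (x y : V3) : Set (Matrix (Fin 3) (Fin 3) ℝ × V3) :=
  {g | SO3 g.1 ∧ g.1 *ᵥ y = y ∧ g.2 = x - g.1 *ᵥ x}

/-- G⁴ = {(I, 0)}, the trivial subgroup. -/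
def G4 : Set (Matrix (Fin 3) (Fin 3) ℝ × V3) := {((1 : Matrix (Fin 3) (Fin 3) ℝ), (0 : V3))}

/-!
The half-turn `R` about the axis `ℝ y₁` lies in `G³(x₁, y₁)`, with translation part `x₁ - R x₁`.
If `G³(x₁, y₁) = G³(x₂, y₂)`, then `R` fixes `y₂`, and comparing translation parts shows that
it also fixes `x₂ - x₁`. The fixed vectors of a half-turn are exactly its axis, which gives
`ν` and `μ`. Conversely, replacing `y` by `ν y` and `x` by `x + μ y` changes neither condition.
-/

section HalfTurn

variable {n : Type*} [Fintype n] [DecidableEq n]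

noncomputable def halfTurn (y : n → ℝ) : Matrix n n ℝ :=
  (2 / (y ⬝ᵥ y)) • vecMulVec y y - 1

theorem halfTurn_mulVec (y v : n → ℝ) :
    halfTurn y *ᵥ v = (2 * (y ⬝ᵥ v) / (y ⬝ᵥ y)) • y - v := by
  rw [halfTurn, sub_mulVec, one_mulVec, smul_mulVec, vecMulVec_mulVec, op_smul_eq_smul,
    smul_smul, div_mul_eq_mul_div]

theorem halfTurn_mulVec_self {y : n → ℝ} (hy : y ≠ 0) : halfTurn y *ᵥ y = y := by
  have hyy : y ⬝ᵥ y ≠ 0 := dotProduct_self_eq_zero.not.mpr hy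
  rw [halfTurn_mulVec, mul_div_assoc, div_self hyy]
  module

theorem halfTurn_mulVec_eq_self_iff {y : n → ℝ} (hy : y ≠ 0) {v : n → ℝ} :
    halfTurn y *ᵥ v = v ↔ ∃ c : ℝ, v = c • y := by
  constructor
  · intro hv
    refine ⟨(y ⬝ᵥ v) / (y ⬝ᵥ y), ?_⟩
    rw [halfTurn_mulVec] at hv
    linear_combination (norm := module) (-1 / 2 : ℝ) • hv
  · rintro ⟨c, rfl⟩
    rw [mulVec_smul, halfTurn_mulVec_self hy]

theorem halfTurn_transpose (y : n → ℝ) : (halfTurn y)ᵀ = halfTurn y := by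
  simp [halfTurn, transpose_sub, transpose_smul, transpose_vecMulVec]

theorem halfTurn_mul_self {y : n → ℝ} (hy : y ≠ 0) : halfTurn y * halfTurn y = 1 := by
  refine ext_iff_mulVec.mpr fun v => ?_
  rw [← mulVec_mulVec, one_mulVec, halfTurn_mulVec y v, mulVec_sub, mulVec_smul,
    halfTurn_mulVec_self hy, halfTurn_mulVec y v]
  abel

theorem det_halfTurn {y : Fin 3 → ℝ} (hy : y ≠ 0) : (halfTurn y).det = 1 := by
  have hyy : y ⬝ᵥ y ≠ 0 := dotProduct_self_eq_zero.not.mpr hy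
  have : halfTurn y = -(1 + replicateCol Unit (-(2 / (y ⬝ᵥ y)) • y) * replicateRow Unit y) := by
    rw [← vecMulVec_eq, halfTurn, smul_vecMulVec, neg_smul]
    abel
  rw [this, det_neg, det_one_add_replicateCol_mul_replicateRow, dotProduct_smul, smul_eq_mul]
  field_simp
  norm_num

theorem halfTurn_SO3 {y : Fin 3 → ℝ} (hy : y ≠ 0) : SO3 (halfTurn y) :=
  ⟨by rw [halfTurn_transpose, halfTurn_mul_self hy], det_halfTurn hy⟩

end HalfTurn

theorem G3_add_smul_smul (x y : V3) (μ : ℝ) {ν : ℝ} (hν : ν ≠ 0) :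
    G3 (x + μ • y) (ν • y) = G3 x y := by
  ext ⟨A, a⟩
  have hfix : A *ᵥ (ν • y) = ν • y ↔ A *ᵥ y = y := by
    rw [mulVec_smul, smul_right_injective V3 hν |>.eq_iff]
  simp only [G3, Set.mem_ofPred_eq, hfix]
  refine and_congr_right fun _ => and_congr_right fun hAy => ?_
  rw [mulVec_add, mulVec_smul, hAy, add_sub_add_right_eq_sub]

theorem exists_smul_of_G3_eq {x₁ y₁ x₂ y₂ : V3} (hy₁ : y₁ ≠ 0) (h : G3 x₁ y₁ = G3 x₂ y₂) :
    (∃ μ : ℝ, x₂ = x₁ + μ • y₁) ∧ ∃ ν : ℝ, y₂ = ν • y₁ := by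
  set R := halfTurn y₁
  have hmem : (R, x₁ - R *ᵥ x₁) ∈ G3 x₂ y₂ :=
    h ▸ ⟨halfTurn_SO3 hy₁, halfTurn_mulVec_self hy₁, rfl⟩
  obtain ⟨-, hRy₂, htrans⟩ := hmem
  have hRx : R *ᵥ (x₂ - x₁) = x₂ - x₁ := by
    rw [mulVec_sub]
    linear_combination (norm := module) htrans
  obtain ⟨μ, hμ⟩ := (halfTurn_mulVec_eq_self_iff hy₁).mp hRx
  exact ⟨⟨μ, by rw [← hμ, add_sub_cancel]⟩, (halfTurn_mulVec_eq_self_iff hy₁).mp hRy₂⟩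

/-- The parametrization of the class G³ is bijective modulo the transformations
(x₂, y₂) = (x₁ + μ y₁, ν y₁), ν ≠ 0. -/
theorem stmt6 (x1 y1 x2 y2 : V3) (h1 : x1 ⨯₃ y1 ≠ 0) (h2 : x2 ⨯₃ y2 ≠ 0) :
    G3 x1 y1 = G3 x2 y2 ↔
      ∃ μ ν : ℝ, ν ≠ 0 ∧ x2 = x1 + μ • y1 ∧ y2 = ν • y1 := by
  have hy1 : y1 ≠ 0 := by rintro rfl; exact h1 (map_zero _)
  have hy2 : y2 ≠ 0 := by rintro rfl; exact h2 (map_zero _)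
  constructor
  · intro h
    obtain ⟨⟨μ, hx⟩, ν, hy⟩ := exists_smul_of_G3_eq hy1 h
    exact ⟨μ, ν, by rintro rfl; exact hy2 (by rw [hy, zero_smul]), hx, hy⟩
  · rintro ⟨μ, ν, hν, rfl, rfl⟩
    exact (G3_add_smul_smul x1 y1 μ hν).symm
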